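/- Conservative extension: Let M be a CGS equipped with a classical valuation V : AP × St → {true, false} and a constant interpretation σ : C → {⊥,⊤}, and let M' be the mv-CGS over the two-element lattice {⊥,⊤} with the same underlying CGS, interpretation σ, and valuation V'(p,q) = ⊤ if V(p,q) = true and V'(p,q) = ⊥ otherwise. Then for every state formula φ (resp. path formula γ) of mv-ATL* and every state q (resp. path λ): [[φ]]_{M',q} = ⊤ if and only if M,q ⊨ φ (resp. [[γ]]_{M',λ} = ⊤ iff M,λ ⊨ γ), where ⊨ is classical two-valued satisfaction. -/
import Mathlib


/-- A concurrent game structure (CGS): availability function `d` (with every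
`d a q` nonempty) and a deterministic transition function `t`. -/
structure CGS (Agt St Act : Type*) where
  d : Agt → St → Set Act
  d_nonempty : ∀ a q, (d a q).Nonempty
  t : St → (Agt → Act) → St

namespace CGS

variable {Agt St Act : Type*}

/-- An action profile `α` is available at state `q`. -/
def Avail (G : CGS Agt St Act) (q : St) (α : Agt → Act) : Prop :=
  ∀ a, α a ∈ G.d a q

/-- `lam` is a path of `G`: each step is realized by some available profile. -/
def IsPath (G : CGS Agt St Act) (lam : ℕ → St) : Prop :=
  ∀ i, ∃ α, G.Avail (lam i) α ∧ G.t (lam i) α = lam (i + 1)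

/-- A perfect-recall strategy for agent `a`: a choice of an available action
for every nonempty finite history, represented as (proper prefix, last state). -/
structure PRStrategy (G : CGS Agt St Act) (a : Agt) where
  act : List St → St → Act
  avail : ∀ h q, act h q ∈ G.d a q

/-- A collective perfect-recall strategy for the coalition `A`. -/
def PRColl (G : CGS Agt St Act) (A : Set Agt) := (a : A) → PRStrategy G (a : Agt)

/-- The outcome set of a collective perfect-recall strategy `s` from state `q`:
all paths starting at `q` consistent with `s`. -/
def prOut (G : CGS Agt St Act) {A : Set Agt} (q : St) (s : PRColl G A) : Set (ℕ → St) :=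
  { lam | lam 0 = q ∧ ∀ i, ∃ α, G.Avail (lam i) α ∧ G.t (lam i) α = lam (i + 1) ∧
      ∀ a : A, α (a : Agt) = (s a).act (List.ofFn fun j : Fin i => lam j) (lam i) }

end CGS

mutual
/-- State formulas of mv-ATL*. -/
inductive SForm (AP C Agt : Type) : Type
  | const : C → SForm AP C Agt
  | atom  : AP → SForm AP C Agt
  | and   : SForm AP C Agt → SForm AP C Agt → SForm AP C Agt
  | or    : SForm AP C Agt → SForm AP C Agt → SForm AP C Agt
  | coop  : Set Agt → PForm AP C Agt → SForm AP C Agt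
  | nec   : Set Agt → PForm AP C Agt → SForm AP C Agt
/-- Path formulas of mv-ATL*. -/
inductive PForm (AP C Agt : Type) : Type
  | state : SForm AP C Agt → PForm AP C Agt
  | and   : PForm AP C Agt → PForm AP C Agt → PForm AP C Agt
  | or    : PForm AP C Agt → PForm AP C Agt → PForm AP C Agt
  | next  : PForm AP C Agt → PForm AP C Agt
  | untl  : PForm AP C Agt → PForm AP C Agt → PForm AP C Agt
  | wuntl : PForm AP C Agt → PForm AP C Agt → PForm AP C Agt
end

variable {Agt St Act AP C : Type} {L : Type*} [CompleteLattice L]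

mutual
/-- Multi-valued truth value of a state formula at a state. -/
noncomputable def sval (G : CGS Agt St Act) (σ : C → L) (V : AP → St → L) :
    SForm AP C Agt → St → L
  | .const c, _ => σ c
  | .atom p, q => V p q
  | .and φ ψ, q => sval G σ V φ q ⊓ sval G σ V ψ q
  | .or φ ψ, q => sval G σ V φ q ⊔ sval G σ V ψ q
  | .coop A γ, q => ⨆ s : CGS.PRColl G A, ⨅ lam ∈ CGS.prOut G q s, pval G σ V γ lam
  | .nec A γ, q => ⨅ s : CGS.PRColl G A, ⨆ lam ∈ CGS.prOut G q s, pval G σ V γ lam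

/-- Multi-valued truth value of a path formula on a path. -/
noncomputable def pval (G : CGS Agt St Act) (σ : C → L) (V : AP → St → L) :
    PForm AP C Agt → (ℕ → St) → L
  | .state φ, lam => sval G σ V φ (lam 0)
  | .and γ δ, lam => pval G σ V γ lam ⊓ pval G σ V δ lam
  | .or γ δ, lam => pval G σ V γ lam ⊔ pval G σ V δ lam
  | .next γ, lam => pval G σ V γ (fun k => lam (k + 1))
  | .untl γ δ, lam =>
      ⨆ i : ℕ, (pval G σ V δ (fun k => lam (k + i)) ⊓
        ⨅ j : Fin i, pval G σ V γ (fun k => lam (k + (j : ℕ))))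
  | .wuntl γ δ, lam =>
      (⨅ i : ℕ, pval G σ V γ (fun k => lam (k + i))) ⊔
      ⨆ i : ℕ, (pval G σ V δ (fun k => lam (k + i)) ⊓
        ⨅ j : Fin i, pval G σ V γ (fun k => lam (k + (j : ℕ))))
end

mutual
/-- Classical two-valued satisfaction of state formulas, for a CGS with a
classical valuation `V : AP → St → Bool` and constant interpretation
`σ : C → Prop` (the two-element lattice realized as `Prop`). -/
def ssat (G : CGS Agt St Act) (σ : C → Prop) (V : AP → St → Bool) :
    SForm AP C Agt → St → Prop
  | .const c, _ => σ c
  | .atom p, q => V p q = true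
  | .and φ ψ, q => ssat G σ V φ q ∧ ssat G σ V ψ q
  | .or φ ψ, q => ssat G σ V φ q ∨ ssat G σ V ψ q
  | .coop A γ, q => ∃ s : CGS.PRColl G A, ∀ lam ∈ CGS.prOut G q s, psat G σ V γ lam
  | .nec A γ, q => ∀ s : CGS.PRColl G A, ∃ lam ∈ CGS.prOut G q s, psat G σ V γ lam

/-- Classical two-valued satisfaction of path formulas. -/
def psat (G : CGS Agt St Act) (σ : C → Prop) (V : AP → St → Bool) :
    PForm AP C Agt → (ℕ → St) → Prop
  | .state φ, lam => ssat G σ V φ (lam 0)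
  | .and γ δ, lam => psat G σ V γ lam ∧ psat G σ V δ lam
  | .or γ δ, lam => psat G σ V γ lam ∨ psat G σ V δ lam
  | .next γ, lam => psat G σ V γ (fun k => lam (k + 1))
  | .untl γ δ, lam => ∃ i : ℕ, psat G σ V δ (fun k => lam (k + i)) ∧
      ∀ j : Fin i, psat G σ V γ (fun k => lam (k + (j : ℕ)))
  | .wuntl γ δ, lam => (∀ i : ℕ, psat G σ V γ (fun k => lam (k + i))) ∨
      ∃ i : ℕ, psat G σ V δ (fun k => lam (k + i)) ∧
        ∀ j : Fin i, psat G σ V γ (fun k => lam (k + (j : ℕ)))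
end


section Conserv
variable {Agt St Act AP C : Type}

mutual
theorem skey (G : CGS Agt St Act) (σ : C → Prop) (V : AP → St → Bool)
    (φ : SForm AP C Agt) (q : St) :
    sval G σ (fun p q' => (V p q' = true : Prop)) φ q ↔ ssat G σ V φ q := by
  cases φ with
  | const c => simp [sval, ssat]
  | atom p => simp [sval, ssat]
  | and φ ψ =>
      simp only [sval, ssat, inf_Prop_eq]
      exact and_congr (skey G σ V φ q) (skey G σ V ψ q)
  | or φ ψ =>
      simp only [sval, ssat, sup_Prop_eq]
      exact or_congr (skey G σ V φ q) (skey G σ V ψ q)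
  | coop A γ =>
      simp only [sval, ssat, iSup_Prop_eq, iInf_Prop_eq]
      exact exists_congr fun s => forall_congr' fun lam => forall_congr' fun _ =>
        pkey G σ V γ lam
  | nec A γ =>
      simp only [sval, ssat, iSup_Prop_eq, iInf_Prop_eq]
      refine forall_congr' fun s => exists_congr fun lam => ?_
      rw [exists_prop]
      exact and_congr Iff.rfl (pkey G σ V γ lam)

theorem pkey (G : CGS Agt St Act) (σ : C → Prop) (V : AP → St → Bool)
    (γ : PForm AP C Agt) (lam : ℕ → St) :
    pval G σ (fun p q' => (V p q' = true : Prop)) γ lam ↔ psat G σ V γ lam := by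
  cases γ with
  | state φ => simpa [pval, psat] using skey G σ V φ (lam 0)
  | and γ δ =>
      simp only [pval, psat, inf_Prop_eq]
      exact and_congr (pkey G σ V γ lam) (pkey G σ V δ lam)
  | or γ δ =>
      simp only [pval, psat, sup_Prop_eq]
      exact or_congr (pkey G σ V γ lam) (pkey G σ V δ lam)
  | next γ =>
      simpa [pval, psat] using pkey G σ V γ (fun k => lam (k + 1))
  | untl γ δ =>
      simp only [pval, psat, iSup_Prop_eq, iInf_Prop_eq, inf_Prop_eq]
      exact exists_congr fun i => and_congr (pkey G σ V δ _)
        (forall_congr' fun j => pkey G σ V γ _)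
  | wuntl γ δ =>
      simp only [pval, psat, iSup_Prop_eq, iInf_Prop_eq, inf_Prop_eq, sup_Prop_eq]
      exact or_congr (forall_congr' fun i => pkey G σ V γ _)
        (exists_congr fun i => and_congr (pkey G σ V δ _)
          (forall_congr' fun j => pkey G σ V γ _))
end

end Conserv

/-- Conservative extension: over the two-element lattice (realized as `Prop`),
with the multi-valued valuation `V'(p,q) = ⊤` iff `V(p,q) = true`, the
multi-valued truth value of a formula equals `⊤` exactly when the formula is
classically satisfied. -/
theorem stmt_11 {Agt St Act AP C : Type} [Fintype Agt] [Fintype St] [Fintype Act]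
    [Nonempty Agt] [Nonempty St] [Nonempty Act]
    (G : CGS Agt St Act) (σ : C → Prop) (V : AP → St → Bool) :
    (∀ (φ : SForm AP C Agt) (q : St),
      sval G σ (fun p q' => (V p q' = true : Prop)) φ q = (⊤ : Prop) ↔ ssat G σ V φ q) ∧
    (∀ (γ : PForm AP C Agt) (lam : ℕ → St), G.IsPath lam →
      (pval G σ (fun p q' => (V p q' = true : Prop)) γ lam = (⊤ : Prop) ↔ psat G σ V γ lam)) := by
  constructor
  · intro φ q
    rw [show ((⊤ : Prop) = True) from rfl, eq_iff_iff, iff_true]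
    exact skey G σ V φ q
  · intro γ lam _
    rw [show ((⊤ : Prop) = True) from rfl, eq_iff_iff, iff_true]
    exact pkey G σ V γ lam
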